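/- Let C be a symmetric positive definite D×D real matrix, μ ∈ ℝ^D, β > 0, P ∈ ℝ^{D×S} with full column rank S, and p ∈ ℝ^D such that [P p] has full column rank S+1. Define G(Q) = μᵀ Q (Qᵀ C Q + β I)⁻¹ Qᵀ μ for a full-column-rank matrix Q. Then G([P p]) ≥ G(P), i.e., the receive discriminant gain is monotone nondecreasing when the compression subspace dimension increases by one. -/

import Mathlib

open Matrix

/-- Receive discriminant gain of a compression matrix `Q`. -/
noncomputable def recvDG {D S : ℕ} (C : Matrix (Fin D) (Fin D) ℝ) (μ : Fin D → ℝ)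
    (β : ℝ) (Q : Matrix (Fin D) (Fin S) ℝ) : ℝ :=
  μ ⬝ᵥ (Q *ᵥ ((Qᵀ * C * Q + β • (1 : Matrix (Fin S) (Fin S) ℝ))⁻¹ *ᵥ (Qᵀ *ᵥ μ)))

/-- Appending a column `p` to `P`. -/
def appendCol {D S : ℕ} (P : Matrix (Fin D) (Fin S) ℝ) (p : Fin D → ℝ) :
    Matrix (Fin D) (Fin (S + 1)) ℝ :=
  Matrix.of fun i j => Fin.lastCases (p i) (fun k => P i k) j

/-!
Write `M_Q = Qᵀ C Q + β I` and `v = Qᵀ μ`. Since `M_Q` is positive definite,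
`vᵀ M_Q⁻¹ v = max_y (2 vᵀ y - yᵀ M_Q y)`, so `G(Q)` is the maximum of
`g_Q(y) = 2 μᵀ Q y - (Q y)ᵀ C (Q y) - β ‖y‖²`. Padding `y` with a zero coordinate gives
`g_{[P p]}(y, 0) = g_P(y)`: the maximum over the larger space can only be bigger.
-/

namespace Matrix.PosDef

variable {n : Type*} [Fintype n] [DecidableEq n] {M : Matrix n n ℝ}

lemma mulVec_inv_mulVec (hM : M.PosDef) (v : n → ℝ) : M *ᵥ (M⁻¹ *ᵥ v) = v := by
  rw [mulVec_mulVec, mul_nonsing_inv _ hM.det_pos.ne'.isUnit, one_mulVec]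

/-- The variational form of `vᵀ M⁻¹ v`; equality holds at `x = M⁻¹ v`. -/
lemma two_mul_dotProduct_sub_le (hM : M.PosDef) (v x : n → ℝ) :
    2 * (v ⬝ᵥ x) - x ⬝ᵥ (M *ᵥ x) ≤ v ⬝ᵥ (M⁻¹ *ᵥ v) := by
  set w := M⁻¹ *ᵥ v
  have hMw : M *ᵥ w = v := hM.mulVec_inv_mulVec v
  have hwx : w ⬝ᵥ (M *ᵥ x) = v ⬝ᵥ x := by
    rw [dotProduct_mulVec, ← mulVec_transpose,
      (isHermitian_iff_isSymm.mp hM.isHermitian).eq, hMw]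
  have hsq : 0 ≤ (x - w) ⬝ᵥ (M *ᵥ (x - w)) := by
    simpa using hM.posSemidef.dotProduct_mulVec_nonneg (x - w)
  have hexpand : (x - w) ⬝ᵥ (M *ᵥ (x - w))
      = x ⬝ᵥ (M *ᵥ x) - 2 * (v ⬝ᵥ x) + v ⬝ᵥ w := by
    rw [mulVec_sub, hMw, sub_dotProduct, dotProduct_sub, dotProduct_sub, hwx,
      dotProduct_comm x v, dotProduct_comm w v]
    ring
  linarith

end Matrix.PosDef

section RegularizedGram

variable {m n : Type*} [Fintype m] [Fintype n]

noncomputable def regGram [DecidableEq n] (C : Matrix m m ℝ) (β : ℝ) (Q : Matrix m n ℝ) :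
    Matrix n n ℝ :=
  Qᵀ * C * Q + β • 1

lemma regGram_posDef [DecidableEq n] {C : Matrix m m ℝ} (hC : C.PosSemidef) {β : ℝ}
    (hβ : 0 < β) (Q : Matrix m n ℝ) : (regGram C β Q).PosDef := by
  refine PosDef.posSemidef_add ?_ (PosDef.one.smul hβ)
  simpa using hC.conjTranspose_mul_mul_same Q

lemma dotProduct_regGram_mulVec [DecidableEq n] (C : Matrix m m ℝ) (β : ℝ) (Q : Matrix m n ℝ)
    (y : n → ℝ) :
    y ⬝ᵥ (regGram C β Q *ᵥ y) = (Q *ᵥ y) ⬝ᵥ (C *ᵥ (Q *ᵥ y)) + β * (y ⬝ᵥ y) := by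
  rw [regGram, add_mulVec, dotProduct_add, ← mulVec_mulVec, ← mulVec_mulVec,
    dotProduct_mulVec y Qᵀ, ← mulVec_transpose, transpose_transpose, smul_mulVec,
    one_mulVec, dotProduct_smul, smul_eq_mul]

noncomputable def gainObjective [DecidableEq n] (C : Matrix m m ℝ) (μ : m → ℝ) (β : ℝ)
    (Q : Matrix m n ℝ) (y : n → ℝ) : ℝ :=
  2 * (μ ⬝ᵥ (Q *ᵥ y)) - y ⬝ᵥ (regGram C β Q *ᵥ y)

end RegularizedGram

section Gain

variable {D S : ℕ} {C : Matrix (Fin D) (Fin D) ℝ} {μ : Fin D → ℝ} {β : ℝ}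

lemma recvDG_eq_dotProduct_inv_mulVec (Q : Matrix (Fin D) (Fin S) ℝ) :
    recvDG C μ β Q = (Qᵀ *ᵥ μ) ⬝ᵥ ((regGram C β Q)⁻¹ *ᵥ (Qᵀ *ᵥ μ)) := by
  rw [dotProduct_comm, dotProduct_transpose_mulVec, recvDG, regGram]

lemma gainObjective_le_recvDG (hC : C.PosSemidef) (hβ : 0 < β) (Q : Matrix (Fin D) (Fin S) ℝ)
    (y : Fin S → ℝ) : gainObjective C μ β Q y ≤ recvDG C μ β Q := by
  rw [gainObjective, recvDG_eq_dotProduct_inv_mulVec, ← dotProduct_transpose_mulVec,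
    dotProduct_comm]
  exact (regGram_posDef hC hβ Q).two_mul_dotProduct_sub_le _ y

lemma gainObjective_inv_mulVec (hC : C.PosSemidef) (hβ : 0 < β)
    (Q : Matrix (Fin D) (Fin S) ℝ) :
    gainObjective C μ β Q ((regGram C β Q)⁻¹ *ᵥ (Qᵀ *ᵥ μ)) = recvDG C μ β Q := by
  rw [gainObjective, (regGram_posDef hC hβ Q).mulVec_inv_mulVec,
    recvDG_eq_dotProduct_inv_mulVec, ← dotProduct_transpose_mulVec, dotProduct_comm]
  ring

lemma snoc_zero_dotProduct_snoc_zero (x y : Fin S → ℝ) :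
    (Fin.snoc x 0 : Fin (S + 1) → ℝ) ⬝ᵥ Fin.snoc y 0 = x ⬝ᵥ y := by
  simp [dotProduct, Fin.sum_univ_castSucc]

lemma appendCol_mulVec_snoc_zero (P : Matrix (Fin D) (Fin S) ℝ) (p : Fin D → ℝ)
    (y : Fin S → ℝ) : appendCol P p *ᵥ Fin.snoc y 0 = P *ᵥ y := by
  ext i
  simp [mulVec, dotProduct, appendCol, Fin.sum_univ_castSucc]

lemma gainObjective_appendCol_snoc_zero (P : Matrix (Fin D) (Fin S) ℝ) (p : Fin D → ℝ)
    (y : Fin S → ℝ) :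
    gainObjective C μ β (appendCol P p) (Fin.snoc y 0) = gainObjective C μ β P y := by
  rw [gainObjective, gainObjective, dotProduct_regGram_mulVec, dotProduct_regGram_mulVec,
    appendCol_mulVec_snoc_zero, snoc_zero_dotProduct_snoc_zero]

end Gain

theorem dg_monotone_in_dimension_general {D S : ℕ}
    (C : Matrix (Fin D) (Fin D) ℝ) (hC : C.PosDef)
    (μ : Fin D → ℝ) (β : ℝ) (hβ : 0 < β)
    (P : Matrix (Fin D) (Fin S) ℝ)
    (p : Fin D → ℝ) :
    recvDG C μ β P ≤ recvDG C μ β (appendCol P p) := by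
  set y := (regGram C β P)⁻¹ *ᵥ (Pᵀ *ᵥ μ)
  calc recvDG C μ β P
      = gainObjective C μ β P y := (gainObjective_inv_mulVec hC.posSemidef hβ P).symm
    _ = gainObjective C μ β (appendCol P p) (Fin.snoc y 0) :=
        (gainObjective_appendCol_snoc_zero P p y).symm
    _ ≤ recvDG C μ β (appendCol P p) := gainObjective_le_recvDG hC.posSemidef hβ _ _

theorem dg_monotone_in_dimension {D S : ℕ}
    (C : Matrix (Fin D) (Fin D) ℝ) (hC : C.PosDef) (hCsymm : C.IsSymm)
    (μ : Fin D → ℝ) (β : ℝ) (hβ : 0 < β)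
    (P : Matrix (Fin D) (Fin S) ℝ) (hP : P.rank = S)
    (p : Fin D → ℝ) (hPp : (appendCol P p).rank = S + 1) :
    recvDG C μ β P ≤ recvDG C μ β (appendCol P p) :=
  dg_monotone_in_dimension_general C hC μ β hβ P p
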